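/- Assume as hypothesis the base case n = 1: for every A ⊆ ℕ with d̄(A ∩ 2ℕ) > 1/3 there is an infinite B ⊆ ℕ with B + B ⊆ A. Then for every n ≥ 1, every 0 ≤ ℓ < 2^{n-1}, and every A ⊆ ℕ with d̄(A ∩ (2^n ℕ + 2ℓ)) > 1/(3·2^{n-1}), there exists an infinite set B ⊆ ℕ such that B + B ⊆ A. -/

import Mathlib

open Filter
open scoped Classical

noncomputable def countIn (A : Set ℕ) (N : ℕ) : ℕ :=
  ((Finset.Icc 1 N).filter (fun n => n ∈ A)).card

noncomputable def upperDensity (A : Set ℕ) : ℝ :=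
  limsup (fun N => (countIn A N : ℝ) / N) atTop

noncomputable def lowerDensity (A : Set ℕ) : ℝ :=
  liminf (fun N => (countIn A N : ℝ) / N) atTop

def hasDensity (A : Set ℕ) (d : ℝ) : Prop :=
  Tendsto (fun N => (countIn A N : ℝ) / N) atTop (nhds d)

/-!
Put `c = 2^(n-1)` and rescale by the affine map `m ↦ c m + 2ℓ`, which sends the even numbers
onto the progression `2^n ℕ + 2ℓ`. Passing to the preimage `A' = {m | c m + 2ℓ ∈ A}` multiplies
the upper density of the relevant part by `c` (up to an error of one element, which is negligible),
so `d̄(A' ∩ 2ℕ) > 1/3` and the base case gives an infinite `B` with `B + B ⊆ A'`. Then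
`c B + ℓ` is infinite and `(c b₁ + ℓ) + (c b₂ + ℓ) = c (b₁ + b₂) + 2ℓ ∈ A`.
-/
lemma countIn_le (A : Set ℕ) (N : ℕ) : countIn A N ≤ N :=
  (Finset.card_filter_le _ _).trans (by simp)

lemma countIn_div_nonneg (A : Set ℕ) (N : ℕ) : 0 ≤ (countIn A N : ℝ) / N := by positivity

lemma countIn_div_le_one (A : Set ℕ) (N : ℕ) : (countIn A N : ℝ) / N ≤ 1 :=
  div_le_one_of_le₀ (mod_cast countIn_le A N) N.cast_nonneg

lemma countIn_le_countIn_div_add_one {S T : Set ℕ} {c a : ℕ}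
    (hST : S ⊆ (fun m => c * m + a) '' T) (M : ℕ) :
    countIn S M ≤ countIn T (M / c) + 1 := by
  have hsub : (Finset.Icc 1 M).filter (· ∈ S) ⊆
      insert a (((Finset.Icc 1 (M / c)).filter (· ∈ T)).image fun m => c * m + a) := by
    intro x hx
    obtain ⟨⟨hx1, hxM⟩, hxS⟩ : (1 ≤ x ∧ x ≤ M) ∧ x ∈ S := by simpa using hx
    obtain ⟨m, hmT, rfl⟩ := hST hxS
    rcases Nat.eq_zero_or_pos (c * m) with hcm | hcm
    · simp [hcm]
    · have hm : m ≤ M / c := (Nat.le_div_iff_mul_le (Nat.pos_of_mul_pos_right hcm)).2 (by lia)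
      exact Finset.mem_insert_of_mem
        (Finset.mem_image_of_mem _ (by
          simpa [hmT, hm, Nat.one_le_iff_ne_zero] using (Nat.pos_of_mul_pos_left hcm).ne'))
  exact (Finset.card_le_card hsub).trans
    ((Finset.card_insert_le _ _).trans (Nat.add_le_add_right Finset.card_image_le 1))

lemma isBoundedUnder_countIn_div (A : Set ℕ) :
    IsBoundedUnder (· ≤ ·) atTop fun N => (countIn A N : ℝ) / N :=
  isBoundedUnder_of ⟨1, countIn_div_le_one A⟩

lemma isCoboundedUnder_countIn_div (A : Set ℕ) :
    IsCoboundedUnder (· ≤ ·) atTop fun N => (countIn A N : ℝ) / N :=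
  isCoboundedUnder_le_of_le atTop (countIn_div_nonneg A)

lemma countIn_div_le_of_countIn_le {S T : Set ℕ} {c M : ℕ} (hc : 0 < c)
    (h : countIn S M ≤ countIn T (M / c) + 1) :
    (countIn S M : ℝ) / M ≤ (countIn T (M / c) : ℝ) / (M / c : ℕ) / c + 1 / M := by
  rcases Nat.eq_zero_or_pos (M / c) with hMc | hMc
  · have : countIn S M ≤ 1 := by simpa [hMc, countIn] using h
    rw [hMc]
    simp only [Nat.cast_zero, div_zero, zero_div, zero_add]
    exact div_le_div_of_nonneg_right (mod_cast this) M.cast_nonneg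
  · have hcM : ((c * (M / c) : ℕ) : ℝ) ≤ M := mod_cast Nat.mul_div_le M c
    calc (countIn S M : ℝ) / M ≤ (countIn T (M / c) + 1 : ℝ) / M :=
          div_le_div_of_nonneg_right (mod_cast h) M.cast_nonneg
      _ = (countIn T (M / c) : ℝ) / M + 1 / M := add_div _ _ _
      _ ≤ (countIn T (M / c) : ℝ) / (c * (M / c) : ℕ) + 1 / M := by gcongr
      _ = (countIn T (M / c) : ℝ) / (M / c : ℕ) / c + 1 / M := by push_cast; rw [div_div, mul_comm]

lemma upperDensity_le_div_of_countIn_le {S T : Set ℕ} {c : ℕ} (hc : 0 < c)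
    (h : ∀ M, countIn S M ≤ countIn T (M / c) + 1) :
    upperDensity S ≤ upperDensity T / c := by
  set w : ℕ → ℝ := fun M => (countIn T (M / c) : ℝ) / (M / c : ℕ)
  have hw0 : ∀ M, 0 ≤ w M := fun M => countIn_div_nonneg T _
  have hw1 : ∀ M, w M ≤ 1 := fun M => countIn_div_le_one T _
  have hwc0 : ∀ M, 0 ≤ w M / c := fun M => div_nonneg (hw0 M) c.cast_nonneg
  have hwc1 : ∀ M, w M / c ≤ 1 := fun M =>
    div_le_one_of_le₀ ((hw1 M).trans (mod_cast hc)) c.cast_nonneg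
  have hdiv_mono : Monotone fun x : ℝ => x / c := fun _ _ hxy =>
    div_le_div_of_nonneg_right hxy c.cast_nonneg
  calc upperDensity S
      ≤ limsup (fun M => w M / c + 1 / (M : ℝ)) atTop :=
        limsup_le_limsup (Eventually.of_forall fun M => countIn_div_le_of_countIn_le hc (h M))
          (isCoboundedUnder_countIn_div S)
          (isBoundedUnder_le_add (isBoundedUnder_of ⟨1, hwc1⟩)
            tendsto_one_div_atTop_nhds_zero_nat.isBoundedUnder_le)
    _ ≤ limsup (fun M => w M / c) atTop + limsup (fun M : ℕ => 1 / (M : ℝ)) atTop :=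
        limsup_add_le (u := fun M => w M / c) (v := fun M : ℕ => 1 / (M : ℝ))
          (isBoundedUnder_of ⟨0, hwc0⟩) (isBoundedUnder_of ⟨1, hwc1⟩)
          tendsto_one_div_atTop_nhds_zero_nat.isCoboundedUnder_le
          tendsto_one_div_atTop_nhds_zero_nat.isBoundedUnder_le
    _ = limsup w atTop / c := by
        rw [tendsto_one_div_atTop_nhds_zero_nat.limsup_eq, add_zero]
        exact (hdiv_mono.map_limsup_of_continuousAt w (continuous_id.div_const _).continuousAt
          (isBoundedUnder_of ⟨1, hw1⟩) (isCoboundedUnder_le_of_le atTop hw0)).symm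
    _ ≤ upperDensity T / c := by
        gcongr
        exact (Nat.tendsto_div_const_atTop hc.ne').limsup_comp_le_limsup
          (u := fun N => (countIn T N : ℝ) / N)
          (isCoboundedUnder_le_of_le _ (countIn_div_nonneg T)) (isBoundedUnder_countIn_div T)

lemma upperDensity_le_div_of_subset_image {S T : Set ℕ} {c a : ℕ} (hc : 0 < c)
    (hST : S ⊆ (fun m => c * m + a) '' T) :
    upperDensity S ≤ upperDensity T / c :=
  upperDensity_le_div_of_countIn_le hc (countIn_le_countIn_div_add_one hST)

lemma exists_infinite_sums_mem_of_affine {A B : Set ℕ} {c a : ℕ} (hc : 0 < c) (hB : B.Infinite)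
    (hBA : ∀ b₁ ∈ B, ∀ b₂ ∈ B, c * (b₁ + b₂) + 2 * a ∈ A) :
    ∃ B' : Set ℕ, B'.Infinite ∧ ∀ b₁ ∈ B', ∀ b₂ ∈ B', b₁ + b₂ ∈ A := by
  refine ⟨(fun b => c * b + a) '' B, hB.image fun x _ y _ hxy => ?_, ?_⟩
  · exact Nat.eq_of_mul_eq_mul_left hc (Nat.add_right_cancel hxy)
  · rintro _ ⟨x, hx, rfl⟩ _ ⟨y, hy, rfl⟩
    convert hBA x hx y hy using 1
    ring

theorem BB_from_pow_two_progressions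
    (hbase : ∀ A : Set ℕ, 1 / 3 < upperDensity (A ∩ {m : ℕ | m % 2 = 0}) →
      ∃ B : Set ℕ, B.Infinite ∧ ∀ b₁ ∈ B, ∀ b₂ ∈ B, b₁ + b₂ ∈ A) :
    ∀ n : ℕ, 1 ≤ n → ∀ ℓ : ℕ, ℓ < 2 ^ (n - 1) → ∀ A : Set ℕ,
      1 / (3 * 2 ^ (n - 1) : ℝ) <
        upperDensity (A ∩ {m : ℕ | ∃ k : ℕ, m = 2 ^ n * k + 2 * ℓ}) →
      ∃ B : Set ℕ, B.Infinite ∧ ∀ b₁ ∈ B, ∀ b₂ ∈ B, b₁ + b₂ ∈ A := by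
  intro n hn ℓ _ A hA
  set c := 2 ^ (n - 1)
  have hc : 0 < c := by positivity
  have hcR : (0 : ℝ) < c := mod_cast hc
  have h2n : 2 ^ n = c * 2 := by rw [← pow_succ]; congr 1; lia
  set T := {m | c * m + 2 * ℓ ∈ A} ∩ {m : ℕ | m % 2 = 0}
  have hST : A ∩ {m : ℕ | ∃ k : ℕ, m = 2 ^ n * k + 2 * ℓ} ⊆ (fun m => c * m + 2 * ℓ) '' T := by
    rintro _ ⟨hA, k, rfl⟩
    exact ⟨2 * k, ⟨by rwa [h2n, mul_assoc] at hA, by simp⟩, by rw [h2n]; ring⟩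
  have hT : 1 / 3 < upperDensity T := by
    have h := hA.trans_le (upperDensity_le_div_of_subset_image hc hST)
    have hcancel : 1 / (3 * 2 ^ (n - 1) : ℝ) * c = 1 / 3 := by push_cast [c]; field_simp
    rwa [lt_div_iff₀ hcR, hcancel] at h
  obtain ⟨B, hB, hBT⟩ := hbase _ hT
  exact exists_infinite_sums_mem_of_affine hc hB hBT
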